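/- For the turn-based game graph of Figure 2, for every set of nodes P ⊆ V and every initial node v ∈ V, at least one of the following fails: (i) player 1 realizes the recurrence property □◇P from v; (ii) player 0 realizes the property □◇P → (□◇G1 ∧ □◇G2) from v, where G1 = {s6} and G2 = {s0}. -/
import Mathlib


namespace Fig2

/-- Nodes `s0, …, s6` of the game graph of Figure 2. -/
abbrev V := Fin 7

/-- Player 0 owns the odd-indexed nodes `s1, s3, s5`;
player 1 owns the even-indexed nodes `s0, s2, s4, s6`. -/
def owner : V → Fin 2 := fun v => if v.val % 2 = 1 then 0 else 1

/-- The edge relation of player `j`: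
`ρ0 = {s1→s0, s1→s2, s3→s2, s3→s4, s5→s6}` and
`ρ1 = {s0→s1, s2→s3, s4→s1, s4→s5, s6→s3}`. -/
def ρ : Fin 2 → V → V → Prop := fun j v u =>
  ((j.val, v.val, u.val) : ℕ × ℕ × ℕ) ∈
    [(0,1,0), (0,1,2), (0,3,2), (0,3,4), (0,5,6),
     (1,0,1), (1,2,3), (1,4,1), (1,4,5), (1,6,3)]

/-- An infinite play: every step is an edge of the player owning the current node. -/
def IsPlay (w : ℕ → V) : Prop := ∀ k : ℕ, ρ (owner (w k)) (w k) (w (k + 1))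

/-- A strategy maps a finite history together with the current node to the next node. -/
abbrev Strategy := List V → V → V

/-- A strategy of player `j` must choose edges of `ρ j` at nodes owned by player `j`. -/
def ValidStrategy (j : Fin 2) (σ : Strategy) : Prop :=
  ∀ (h : List V) (v : V), owner v = j → ρ j v (σ h v)

/-- A play is consistent with a strategy of player `j` if at every position owned
by player `j`, the next node is the one chosen by the strategy. -/
def Consistent (j : Fin 2) (σ : Strategy) (w : ℕ → V) : Prop :=
  ∀ k : ℕ, owner (w k) = j → w (k + 1) = σ ((List.range k).map w) (w k)

/-- `□◇P`: the play visits `P` infinitely often. -/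
def InfOften (P : Set V) (w : ℕ → V) : Prop := ∀ N : ℕ, ∃ k ≥ N, w k ∈ P

/-- Player `j` realizes property `φ` from node `v`. -/
def Realizes (j : Fin 2) (v : V) (φ : (ℕ → V) → Prop) : Prop :=
  ∃ σ : Strategy, ValidStrategy j σ ∧
    ∀ w : ℕ → V, IsPlay w → w 0 = v → Consistent j σ w → φ w

/-- The goal set `G1 = {s6}` of the game of Figure 2. -/
def G1 : Set V := {6}

/-- The goal set `G2 = {s0}` of the game of Figure 2. -/
def G2 : Set V := {0}

/-! ### Auxiliary infrastructure -/

instance (j : Fin 2) (a b : V) : Decidable (ρ j a b) :=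
  inferInstanceAs (Decidable (_ ∈ _))

/-- The step function of the joint play of strategy `σ` (for player `j`)
against the memoryless strategy `f` of the other player. -/
def step (σ : Strategy) (j : Fin 2) (f : V → V) (h : List V) (u : V) : V :=
  if owner u = j then σ h u else f u

/-- The joint run (history and current node). -/
def run (σ : Strategy) (j : Fin 2) (f : V → V) (v : V) : ℕ → List V × V
  | 0 => ([], v)
  | k+1 => ((run σ j f v k).1 ++ [(run σ j f v k).2],
      step σ j f (run σ j f v k).1 (run σ j f v k).2)

/-- The joint play of `σ` (player `j`) against memoryless `f` starting at `v`. -/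
def play (σ : Strategy) (j : Fin 2) (f : V → V) (v : V) (k : ℕ) : V :=
  (run σ j f v k).2

lemma run_fst (σ : Strategy) (j : Fin 2) (f : V → V) (v : V) :
    ∀ k, (run σ j f v k).1 = (List.range k).map (play σ j f v)
  | 0 => rfl
  | k+1 => by
      rw [List.range_succ, List.map_append]
      show (run σ j f v k).1 ++ [(run σ j f v k).2] = _
      rw [run_fst σ j f v k]; rfl

lemma play_succ (σ : Strategy) (j : Fin 2) (f : V → V) (v : V) (k : ℕ) :
    play σ j f v (k+1) = step σ j f ((List.range k).map (play σ j f v)) (play σ j f v k) := by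
  show step σ j f (run σ j f v k).1 (run σ j f v k).2 = _
  rw [run_fst]; rfl

lemma play_isPlay {σ : Strategy} {j : Fin 2} {f : V → V}
    (hσ : ValidStrategy j σ) (hf : ∀ u, owner u ≠ j → ρ (owner u) u (f u)) (v : V) :
    IsPlay (play σ j f v) := by
  intro k
  rw [play_succ, step]
  by_cases h : owner (play σ j f v k) = j
  · rw [if_pos h, h]; exact hσ _ _ h
  · rw [if_neg h]; exact hf _ h

lemma play_consistent (σ : Strategy) (j : Fin 2) (f : V → V) (v : V) :
    Consistent j σ (play σ j f v) := by
  intro k h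
  rw [play_succ, step, if_pos h]

lemma play_forced {σ : Strategy} {j : Fin 2} {f : V → V} {v : V} {k : ℕ}
    (h : owner (play σ j f v k) ≠ j) :
    play σ j f v (k+1) = f (play σ j f v k) := by
  rw [play_succ, step, if_neg h]

/-- If a rank strictly decreases as long as we are outside `A`, we reach `A`. -/
lemma escape {w : ℕ → V} (A : V → Prop) (r : V → ℕ)
    (h : ∀ k, ¬ A (w k) → r (w (k+1)) < r (w k)) : ∃ K, A (w K) := by
  by_contra hc
  push_neg at hc
  have key : ∀ k, r (w k) + k ≤ r (w 0) := by
    intro k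
    induction k with
    | zero => omega
    | succ n ih => have := h n (hc n); omega
  have := key (r (w 0) + 1); omega

/-- If `A` holds at time `K` and is preserved by steps, it holds from `K` on. -/
lemma tail {w : ℕ → V} {A : V → Prop} {K : ℕ} (h0 : A (w K))
    (hstep : ∀ k, A (w k) → A (w (k+1))) : ∀ k, K ≤ k → A (w k) := by
  intro k hk
  induction k, hk using Nat.le_induction with
  | base => exact h0
  | succ n _ ih => exact hstep n ih

/-! ### Memoryless strategies used in the proof -/

/-- Player 1: `s4 → s1` (avoid `s5`). -/
def f1 : V → V := ![1,0,3,0,1,0,3]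
/-- Player 1: `s4 → s5`. -/
def f2 : V → V := ![1,0,3,0,5,0,3]
/-- Player 0: `s1 → s0`, `s3 → s2`. -/
def g1 : V → V := ![0,0,0,2,0,6,0]
/-- Player 0: `s1 → s2`, `s3 → s2`. -/
def g2 : V → V := ![0,2,0,2,0,6,0]
/-- Player 0: `s1 → s0`, `s3 → s4`. -/
def g3 : V → V := ![0,0,0,4,0,6,0]

lemma f1_valid : ∀ u : V, owner u ≠ 0 → ρ (owner u) u (f1 u) := by decide
lemma f2_valid : ∀ u : V, owner u ≠ 0 → ρ (owner u) u (f2 u) := by decide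
lemma g1_valid : ∀ u : V, owner u ≠ 1 → ρ (owner u) u (g1 u) := by decide
lemma g2_valid : ∀ u : V, owner u ≠ 1 → ρ (owner u) u (g2 u) := by decide
lemma g3_valid : ∀ u : V, owner u ≠ 1 → ρ (owner u) u (g3 u) := by decide

/-! ### Local step facts (all decidable) -/

lemma F_rank : ∀ a b : V, ρ (owner a) a b → (owner a ≠ 1 → b = g2 a) →
    ¬(a = 2 ∨ a = 3) → (![2,1,0,0,3,2,1] : V → ℕ) b < (![2,1,0,0,3,2,1] : V → ℕ) a := by
  decide

lemma F_closed : ∀ a b : V, ρ (owner a) a b → (owner a ≠ 1 → b = g2 a) →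
    (a = 2 ∨ a = 3) → (b = 2 ∨ b = 3) := by decide

lemma E_closed : ∀ a b : V, ρ (owner a) a b → (owner a ≠ 1 → b = g1 a) →
    (a = 0 ∨ a = 1) → (b = 0 ∨ b = 1) := by decide

lemma C_closed : ∀ a b : V, ρ (owner a) a b → (owner a ≠ 0 → b = f2 a) →
    (a ≠ 0 ∧ a ≠ 1) → (b ≠ 0 ∧ b ≠ 1) := by decide

lemma no5 : ∀ a b : V, ρ (owner a) a b → (owner a ≠ 0 → b = f1 a) → b ≠ 5 := by decide

lemma pred6 : ∀ a b : V, ρ (owner a) a b → b = 6 → a = 5 := by decide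
lemma pred3 : ∀ a b : V, ρ (owner a) a b → b = 3 → a = 2 ∨ a = 6 := by decide
lemma pred4 : ∀ a b : V, ρ (owner a) a b → b = 4 → a = 3 := by decide

lemma B_from2 : ∀ a b : V, ρ (owner a) a b → (owner a ≠ 0 → b = f1 a) → a = 2 → b = 3 := by
  decide

lemma from0 : ∀ a b : V, ρ (owner a) a b → a = 0 → b = 1 := by decide
lemma from1 : ∀ a b : V, ρ (owner a) a b → a = 1 → b = 0 ∨ b = 2 := by decide
lemma from3 : ∀ a b : V, ρ (owner a) a b → a = 3 → b = 2 ∨ b = 4 := by decide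
lemma from5 : ∀ a b : V, ρ (owner a) a b → a = 5 → b = 6 := by decide

lemma C_from2 : ∀ a b : V, ρ (owner a) a b → (owner a ≠ 0 → b = f2 a) → a = 2 → b = 3 := by
  decide
lemma C_from4 : ∀ a b : V, ρ (owner a) a b → (owner a ≠ 0 → b = f2 a) → a = 4 → b = 5 := by
  decide
lemma C_from6 : ∀ a b : V, ρ (owner a) a b → (owner a ≠ 0 → b = f2 a) → a = 6 → b = 3 := by
  decide

lemma G_no2 : ∀ a b : V, ρ (owner a) a b → (owner a ≠ 1 → b = g3 a) → b ≠ 2 := by decide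

lemma case01 : ∀ x : V, x ≠ 2 → x ≠ 3 → x ≠ 4 → x ≠ 5 → x ≠ 6 → x = 0 ∨ x = 1 := by decide
lemma caseS : ∀ x : V, x ≠ 0 → x ≠ 1 → x = 2 ∨ x = 3 ∨ x = 4 ∨ x = 5 ∨ x = 6 := by decide
lemma caseNot2 : ∀ x : V, x ≠ 2 → x = 0 ∨ x = 1 ∨ x = 3 ∨ x = 4 ∨ x = 5 ∨ x = 6 := by decide

/-- in the game of Figure 2, for every set of nodes `P` and every
initial node `v`, it is not the case that both player 1 realizes `□◇P` from `v`
and player 0 realizes `□◇P → (□◇G1 ∧ □◇G2)` from `v`. -/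
theorem nonexistence_recurrence_assumption (P : Set V) (v : V) :
    ¬ (Realizes 1 v (InfOften P) ∧
       Realizes 0 v (fun w => InfOften P w → (InfOften G1 w ∧ InfOften G2 w))) := by
  rintro ⟨⟨σ1, hσ1v, hσ1⟩, ⟨σ0, hσ0v, hσ0⟩⟩
  -- Play F : player 1's strategy σ1 against the memoryless player-0 strategy g2.
  -- Its tail lies in {2,3}, which gives 2 ∈ P ∨ 3 ∈ P.
  set F : ℕ → V := play σ1 1 g2 v with hFdef
  have hFplay : IsPlay F := play_isPlay hσ1v g2_valid v
  have hFP : InfOften P F := hσ1 F hFplay rfl (play_consistent σ1 1 g2 v)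
  have hFforced : ∀ k, owner (F k) ≠ 1 → F (k+1) = g2 (F k) := fun k h => play_forced h
  obtain ⟨K, hK⟩ : ∃ K, F K = 2 ∨ F K = 3 :=
    escape (fun x => x = 2 ∨ x = 3) (![2,1,0,0,3,2,1])
      (fun k h => F_rank _ _ (hFplay k) (hFforced k) h)
  have hFtail : ∀ k, K ≤ k → (F k = 2 ∨ F k = 3) :=
    tail (A := fun x => x = 2 ∨ x = 3) hK
      (fun k h => F_closed _ _ (hFplay k) (hFforced k) h)
  have hP23 : (2:V) ∈ P ∨ (3:V) ∈ P := by
    obtain ⟨k, hk, hkP⟩ := hFP K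
    rcases hFtail k hk with h | h
    · exact Or.inl (h ▸ hkP)
    · exact Or.inr (h ▸ hkP)
  -- Play B : player 0's strategy σ0 against the memoryless player-1 strategy f1.
  -- It never reaches s6 (after time 1), so G1 fails, so P is eventually avoided;
  -- together with hP23 this forces the tail into {0,1}, giving 0 ∉ P and 1 ∉ P.
  set B : ℕ → V := play σ0 0 f1 v with hBdef
  have hBplay : IsPlay B := play_isPlay hσ0v f1_valid v
  have hBforced : ∀ k, owner (B k) ≠ 0 → B (k+1) = f1 (B k) := fun k h => play_forced h
  have hBimp := hσ0 B hBplay rfl (play_consistent σ0 0 f1 v)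
  have hBno5 : ∀ k, B (k+1) ≠ 5 := fun k => no5 _ _ (hBplay k) (hBforced k)
  have hBno6 : ∀ k, B (k+2) ≠ 6 := fun k h => hBno5 k (pred6 _ _ (hBplay (k+1)) h)
  have hBnG1 : ¬ InfOften G1 B := by
    intro h
    obtain ⟨k, hk, hkP⟩ := h 2
    obtain ⟨m, rfl⟩ : ∃ m, k = m + 2 := ⟨k - 2, by omega⟩
    exact hBno6 m (Set.mem_singleton_iff.mp hkP)
  have hBnP : ¬ InfOften P B := fun hp => hBnG1 (hBimp hp).1
  obtain ⟨N, hN⟩ : ∃ N, ∀ k ≥ N, B k ∉ P := by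
    unfold InfOften at hBnP; push_neg at hBnP; exact hBnP
  have hB23 : ∀ k, N+3 ≤ k → (B k ≠ 2 ∧ B k ≠ 3) := by
    rcases hP23 with h2P | h3P
    · intro k hk
      refine ⟨fun h => hN k (by omega) (h ▸ h2P), fun h => ?_⟩
      obtain ⟨m, rfl⟩ : ∃ m, k = m + 3 := ⟨k - 3, by omega⟩
      rcases pred3 _ _ (hBplay (m+2)) h with h' | h'
      · exact hN (m+2) (by omega) (h' ▸ h2P)
      · exact hBno6 m h'
    · intro k hk
      refine ⟨fun h => ?_, fun h => hN k (by omega) (h ▸ h3P)⟩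
      have h3 := B_from2 _ _ (hBplay k) (hBforced k) h
      exact hN (k+1) (by omega) (h3 ▸ h3P)
  have hB4 : ∀ k, N+4 ≤ k → B k ≠ 4 := by
    intro k hk h
    obtain ⟨m, rfl⟩ : ∃ m, k = m + 1 := ⟨k - 1, by omega⟩
    exact (hB23 m (by omega)).2 (pred4 _ _ (hBplay m) h)
  have hB01 : ∀ k, N+4 ≤ k → (B k = 0 ∨ B k = 1) := by
    intro k hk
    have h5 : B k ≠ 5 := by
      obtain ⟨m, rfl⟩ : ∃ m, k = m + 1 := ⟨k - 1, by omega⟩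
      exact hBno5 m
    have h6 : B k ≠ 6 := by
      obtain ⟨m, rfl⟩ : ∃ m, k = m + 2 := ⟨k - 2, by omega⟩
      exact hBno6 m
    exact case01 _ (hB23 k (by omega)).1 (hB23 k (by omega)).2 (hB4 k hk) h5 h6
  have h01P : (0:V) ∉ P ∧ (1:V) ∉ P := by
    rcases hB01 (N+4) le_rfl with h | h
    · have h1 : B (N+5) = 1 := from0 _ _ (hBplay (N+4)) h
      exact ⟨fun hm => hN (N+4) (by omega) (h ▸ hm),
             fun hm => hN (N+5) (by omega) (h1 ▸ hm)⟩
    · have h1 : B (N+5) = 0 := by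
        rcases from1 _ _ (hBplay (N+4)) h with h' | h'
        · exact h'
        · exact absurd h' (hB23 (N+5) (by omega)).1
      exact ⟨fun hm => hN (N+5) (by omega) (h1 ▸ hm),
             fun hm => hN (N+4) (by omega) (h ▸ hm)⟩
  obtain ⟨h0P, h1P⟩ := h01P
  -- Play C : player 0's strategy σ0 against the memoryless player-1 strategy f2.
  set C : ℕ → V := play σ0 0 f2 v with hCdef
  have hCplay : IsPlay C := play_isPlay hσ0v f2_valid v
  have hCforced : ∀ k, owner (C k) ≠ 0 → C (k+1) = f2 (C k) := fun k h => play_forced h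
  have hCimp := hσ0 C hCplay rfl (play_consistent σ0 0 f2 v)
  by_cases hS : ∀ k, C k = 0 ∨ C k = 1
  · -- Then v ∈ {0,1}; play E : σ1 against g1 stays in {0,1} forever, never in P.
    have hv : v = 0 ∨ v = 1 := hS 0
    set E : ℕ → V := play σ1 1 g1 v with hEdef
    have hEplay : IsPlay E := play_isPlay hσ1v g1_valid v
    have hEP : InfOften P E := hσ1 E hEplay rfl (play_consistent σ1 1 g1 v)
    have hE01 : ∀ k, E k = 0 ∨ E k = 1 := by
      intro k
      induction k with
      | zero => exact hv
      | succ n ih => exact E_closed _ _ (hEplay n) (fun h => play_forced h) ih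
    obtain ⟨k, _, hkP⟩ := hEP 0
    rcases hE01 k with h | h
    · exact h0P (h ▸ hkP)
    · exact h1P (h ▸ hkP)
  · push_neg at hS
    obtain ⟨k₁, hk₁⟩ := hS
    have hCtail : ∀ k, k₁ ≤ k → (C k ≠ 0 ∧ C k ≠ 1) :=
      tail (A := fun x => x ≠ 0 ∧ x ≠ 1) hk₁
        (fun k h => C_closed _ _ (hCplay k) (hCforced k) h)
    have hCnG2 : ¬ InfOften G2 C := by
      intro h
      obtain ⟨k, hk, hkP⟩ := h k₁
      exact (hCtail k hk).1 (Set.mem_singleton_iff.mp hkP)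
    have hCnP : ¬ InfOften P C := fun hp => hCnG2 (hCimp hp).2
    obtain ⟨Nc, hNc⟩ : ∃ Nc, ∀ k ≥ Nc, C k ∉ P := by
      unfold InfOften at hCnP; push_neg at hCnP; exact hCnP
    -- From time k₁ + Nc on, C stays outside {0,1} and outside P; it must hit s3.
    obtain ⟨j, hjM, hj3⟩ : ∃ j, k₁ + Nc ≤ j ∧ C j = 3 := by
      set M := k₁ + Nc with hMdef
      have hMS := hCtail M (by omega)
      rcases caseS _ hMS.1 hMS.2 with h | h | h | h | h
      · exact ⟨M+1, by omega, C_from2 _ _ (hCplay M) (hCforced M) h⟩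
      · exact ⟨M, by omega, h⟩
      · have h5 := C_from4 _ _ (hCplay M) (hCforced M) h
        have h6 := from5 _ _ (hCplay (M+1)) h5
        exact ⟨M+3, by omega, C_from6 _ _ (hCplay (M+2)) (hCforced (M+2)) h6⟩
      · have h6 := from5 _ _ (hCplay M) h
        exact ⟨M+2, by omega, C_from6 _ _ (hCplay (M+1)) (hCforced (M+1)) h6⟩
      · exact ⟨M+1, by omega, C_from6 _ _ (hCplay M) (hCforced M) h⟩
    have h3P : (3:V) ∉ P := fun hm => hNc j (by omega) (hj3 ▸ hm)
    have h2P : (2:V) ∈ P := hP23.resolve_right h3P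
    have hj4 : C (j+1) = 4 := by
      rcases from3 _ _ (hCplay j) hj3 with h | h
      · exact absurd (h ▸ h2P) (hNc (j+1) (by omega))
      · exact h
    have hj5 : C (j+2) = 5 := C_from4 _ _ (hCplay (j+1)) (hCforced (j+1)) hj4
    have hj6 : C (j+3) = 6 := from5 _ _ (hCplay (j+2)) hj5
    have h4P : (4:V) ∉ P := fun hm => hNc (j+1) (by omega) (hj4 ▸ hm)
    have h5P : (5:V) ∉ P := fun hm => hNc (j+2) (by omega) (hj5 ▸ hm)
    have h6P : (6:V) ∉ P := fun hm => hNc (j+3) (by omega) (hj6 ▸ hm)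
    -- Finally, play G : σ1 against g3 never visits s2 (after time 0), so it
    -- eventually avoids P entirely, contradicting □◇P.
    set G : ℕ → V := play σ1 1 g3 v with hGdef
    have hGplay : IsPlay G := play_isPlay hσ1v g3_valid v
    have hGP : InfOften P G := hσ1 G hGplay rfl (play_consistent σ1 1 g3 v)
    obtain ⟨k, hk, hkP⟩ := hGP 1
    obtain ⟨m, rfl⟩ : ∃ m, k = m + 1 := ⟨k - 1, by omega⟩
    have hne2 : G (m+1) ≠ 2 := G_no2 _ _ (hGplay m) (fun h => play_forced h)
    rcases caseNot2 _ hne2 with h | h | h | h | h | h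
    · exact h0P (h ▸ hkP)
    · exact h1P (h ▸ hkP)
    · exact h3P (h ▸ hkP)
    · exact h4P (h ▸ hkP)
    · exact h5P (h ▸ hkP)
    · exact h6P (h ▸ hkP)

end Fig2
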